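/- arXiv:1805.01439 — 2 statements merged into one kernel-verified Lean document; each statement's English description precedes it below -/
import Mathlib

section
/- Let G be a finite graph, τ a set of clique separations of G, J the intersection of the right-hand sides B over all (A,B) ∈ τ, and K ⊆ J. If a, b ∈ J \ K and K separates a from b in the induced subgraph G[J], then K separates a from b in G. -/
/-- `(A, B)` is a clique separation of `G`. -/
def IsCliqueSep {V : Type*} (G : SimpleGraph V) (A B : Set V) : Prop :=
  (A ∪ B = Set.univ ∧ ∀ a ∈ A \ B, ∀ b ∈ B \ A, ¬ G.Adj a b) ∧ G.IsClique (A ∩ B)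

/-- Shortcut lemma: for a clique separation `(A, B)` and a walk ending in `B`, there is a
walk to the same endpoint whose support is contained in the original support and entirely
in `B`; its start is the original start if that lies in `B`, else some vertex of `A ∩ B`. -/
lemma shortcut_walk {V : Type*} {G : SimpleGraph V} {A B : Set V}
    (hs : IsCliqueSep G A B) :
    ∀ {x y : V} (q : G.Walk x y), y ∈ B →
      ∃ w, ∃ q' : G.Walk w y, (∀ v ∈ q'.support, v ∈ q.support) ∧
        (∀ v ∈ q'.support, v ∈ B) ∧ (x ∈ B → w = x) ∧ (x ∉ B → w ∈ A ∩ B) := by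
  intro x y q
  induction q with
  | nil =>
    intro hy
    exact ⟨_, SimpleGraph.Walk.nil, by simp, by simpa using hy, fun _ => rfl,
      fun hx => absurd hy hx⟩
  | @cons x c y h r ih =>
    intro hy
    obtain ⟨w, r', hsub, hinB, hwB, hwA⟩ := ih hy
    have memA : ∀ z, z ∉ B → z ∈ A := by
      intro z hz
      have : z ∈ A ∪ B := hs.1.1 ▸ Set.mem_univ z
      rcases this with h' | h'
      · exact h'
      · exact absurd h' hz
    by_cases hc : c ∈ B
    · -- tail starts in B
      have hwc : w = c := hwB hc
      set r'' : G.Walk c y := r'.copy hwc rfl with hr''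
      have hsub'' : ∀ v ∈ r''.support, v ∈ r.support := by
        intro v hv
        rw [hr'', SimpleGraph.Walk.support_copy] at hv
        exact hsub v hv
      have hinB'' : ∀ v ∈ r''.support, v ∈ B := by
        intro v hv
        rw [hr'', SimpleGraph.Walk.support_copy] at hv
        exact hinB v hv
      by_cases hx : x ∈ B
      · refine ⟨x, SimpleGraph.Walk.cons h r'', ?_, ?_, fun _ => rfl, fun h' => absurd hx h'⟩
        · intro v hv
          simp only [SimpleGraph.Walk.support_cons, List.mem_cons] at hv ⊢
          rcases hv with rfl | hv
          · exact Or.inl rfl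
          · exact Or.inr (hsub'' v hv)
        · intro v hv
          simp only [SimpleGraph.Walk.support_cons, List.mem_cons] at hv
          rcases hv with rfl | hv
          · exact hx
          · exact hinB'' v hv
      · -- x ∈ A \ B, c ∈ B; c must be in A ∩ B
        have hxA : x ∈ A := memA x hx
        have hcA : c ∈ A := by
          by_contra hcA
          exact hs.1.2 x ⟨hxA, hx⟩ c ⟨hc, hcA⟩ h
        refine ⟨c, r'', ?_, hinB'', fun h' => absurd h' hx, fun _ => ⟨hcA, hc⟩⟩
        intro v hv
        simp only [SimpleGraph.Walk.support_cons, List.mem_cons]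
        exact Or.inr (hsub'' v hv)
    · -- c ∉ B, so c ∈ A \ B, and w ∈ A ∩ B
      have hcA : c ∈ A := memA c hc
      have hwAB : w ∈ A ∩ B := hwA hc
      by_cases hx : x ∈ B
      · -- x is adjacent to c ∈ A \ B, so x ∈ A, hence x ∈ A ∩ B
        have hxA : x ∈ A := by
          by_contra hxA
          exact hs.1.2 c ⟨hcA, hc⟩ x ⟨hx, hxA⟩ h.symm
        rcases eq_or_ne x w with hxw | hxw
        · refine ⟨x, r'.copy hxw.symm rfl, ?_, ?_, fun _ => rfl, fun h' => absurd hx h'⟩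
          · intro v hv
            rw [SimpleGraph.Walk.support_copy] at hv
            simp [SimpleGraph.Walk.support_cons]
            exact Or.inr (hsub v hv)
          · intro v hv
            rw [SimpleGraph.Walk.support_copy] at hv
            exact hinB v hv
        · have hadj : G.Adj x w := hs.2 ⟨hxA, hx⟩ hwAB hxw
          refine ⟨x, SimpleGraph.Walk.cons hadj r', ?_, ?_, fun _ => rfl,
            fun h' => absurd hx h'⟩
          · intro v hv
            simp only [SimpleGraph.Walk.support_cons, List.mem_cons] at hv ⊢
            rcases hv with rfl | hv
            · exact Or.inl rfl
            · exact Or.inr (hsub v hv)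
          · intro v hv
            simp only [SimpleGraph.Walk.support_cons, List.mem_cons] at hv
            rcases hv with rfl | hv
            · exact hx
            · exact hinB v hv
      · refine ⟨w, r', ?_, hinB, fun h' => absurd h' hx, fun _ => hwAB⟩
        intro v hv
        simp [SimpleGraph.Walk.support_cons]
        exact Or.inr (hsub v hv)

/-- Lemma 5.5: let `τ` be a set of clique separations of a finite graph `G`, let `J` be
the intersection of their right-hand sides, and `K ⊆ J`.  If `K` separates two vertices
`a, b ∈ J \ K` in the induced subgraph `G[J]` (every walk from `a` to `b` within `J`
meets `K`), then `K` separates `a` and `b` in `G`. -/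
theorem clique_separator_transitive {V : Type*} [Fintype V] (G : SimpleGraph V)
    (τ : Set (Set V × Set V)) (hτ : ∀ p ∈ τ, IsCliqueSep G p.1 p.2)
    (J : Set V) (hJ : J = ⋂ p ∈ τ, p.2)
    (K : Set V) (hK : K ⊆ J)
    (a b : V) (ha : a ∈ J \ K) (hb : b ∈ J \ K)
    (hsep : ∀ p : G.Walk a b, (∀ v ∈ p.support, v ∈ J) → ∃ v ∈ p.support, v ∈ K) :
    ∀ p : G.Walk a b, ∃ v ∈ p.support, v ∈ K := by
  classical
  suffices H : ∀ n (p : G.Walk a b),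
      (p.support.toFinset.filter (fun v => v ∉ J)).card ≤ n →
      ∃ v ∈ p.support, v ∈ K by
    intro p
    exact H _ p le_rfl
  intro n
  induction n with
  | zero =>
    intro p hp
    refine hsep p ?_
    intro v hv
    by_contra hvJ
    have : v ∈ p.support.toFinset.filter (fun v => v ∉ J) := by
      simp [hv, hvJ]
    have := Finset.card_pos.mpr ⟨v, this⟩
    omega
  | succ n ih =>
    intro p hp
    by_cases hall : ∀ v ∈ p.support, v ∈ J
    · exact hsep p hall
    · push_neg at hall
      obtain ⟨v, hv, hvJ⟩ := hall
      rw [hJ, Set.mem_iInter₂] at hvJ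
      push_neg at hvJ
      obtain ⟨P, hPτ, hvB⟩ := hvJ
      have hsP := hτ P hPτ
      have hmem : ∀ z, z ∈ J → z ∈ P.2 := by
        intro z hz
        rw [hJ, Set.mem_iInter₂] at hz
        exact hz P hPτ
      obtain ⟨w, q', hsub, hinB, hwB, _⟩ := shortcut_walk hsP p (hmem b hb.1)
      have hwa : w = a := hwB (hmem a ha.1)
      subst hwa
      have hssub : q'.support.toFinset.filter (fun v => v ∉ J) ⊆
          p.support.toFinset.filter (fun v => v ∉ J) := by
        intro z hz
        simp only [Finset.mem_filter, List.mem_toFinset] at hz ⊢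
        exact ⟨hsub z hz.1, hz.2⟩
      have hvmem : v ∈ p.support.toFinset.filter (fun v => v ∉ J) := by
        simp only [Finset.mem_filter, List.mem_toFinset]
        refine ⟨hv, ?_⟩
        intro hvJ'
        exact hvB (hmem v hvJ')
      have hvnot : v ∉ q'.support.toFinset.filter (fun v => v ∉ J) := by
        simp only [Finset.mem_filter, List.mem_toFinset]
        rintro ⟨hv', -⟩
        exact hvB (hinB v hv')
      have hlt : (q'.support.toFinset.filter (fun v => v ∉ J)).card <
          (p.support.toFinset.filter (fun v => v ∉ J)).card :=
        Finset.card_lt_card (Finset.ssubset_iff_of_subset hssub |>.mpr ⟨v, hvmem, hvnot⟩)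
      obtain ⟨k, hk, hkK⟩ := ih q' (by omega)
      exact ⟨k, hsub k hk, hkK⟩
end

section
/- Let G be a finite graph that is not a clique, S the set of clique separations of G, and for each hole H of G define the orientation O_H := {(A,B) ∈ S⃗ : V(H) ⊆ B}. Then O_H is a well-defined consistent orientation of S, and it avoids every subset F = {(A₁,B₁),...,(Aₙ,Bₙ)} of O_H for which G[B₁ ∩ ... ∩ Bₙ] is a clique. -/
/-!
Index the hole cyclically by `ℕ`, `t ↦ emb t`. If a clique separation `(A, B)` split the hole,
with `emb p ∉ A` and `emb q ∉ B` for `p < q < p + n`, then both arcs `p, …, q` and `q, …, p + n`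
would have to pass through the separator `A ∩ B` (no edge crosses from `A \ B` to `B \ A`),
and two separator vertices on different arcs form a chord of the hole. So the hole lies on one
side of every clique separation, and everything else follows because no clique contains a hole.
-/

open scoped Fin.NatCast Fin.CommRing

namespace Fin

variable {n a b : ℕ} [NeZero n]

lemma natCast_sub_natCast_val (hab : a ≤ b) (hba : b < a + n) :
    ((b : Fin n) - a).val = b - a := by
  rw [← Nat.cast_sub hab, Fin.val_natCast, Nat.mod_eq_of_lt (by omega)]

lemma natCast_ne_natCast (hab : a < b) (hba : b < a + n) : (a : Fin n) ≠ b := fun he => by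
  have := natCast_sub_natCast_val (n := n) hab.le hba
  rw [he, sub_self, Fin.val_zero] at this
  omega

end Fin

namespace SimpleGraph

section Separation

variable {V : Type*} {G : SimpleGraph V} {A B : Set V}

def IsSeparation (G : SimpleGraph V) (A B : Set V) : Prop :=
  A ∪ B = Set.univ ∧ ∀ a ∈ A \ B, ∀ b ∈ B \ A, ¬ G.Adj a b

lemma IsSeparation.symm (h : G.IsSeparation A B) : G.IsSeparation B A :=
  ⟨Set.union_comm A B ▸ h.1, fun a ha b hb hab => h.2 b hb a ha hab.symm⟩

lemma IsSeparation.mem_or_mem (h : G.IsSeparation A B) (v : V) : v ∈ A ∨ v ∈ B :=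
  (Set.mem_union v A B).mp (h.1 ▸ Set.mem_univ v)

lemma IsSeparation.notMem_of_adj {u v : V} (h : G.IsSeparation A B) (huv : G.Adj u v)
    (hu : u ∉ A) (hv : v ∉ A ∩ B) : v ∉ A := fun hvA =>
  h.2 v ⟨hvA, fun hvB => hv ⟨hvA, hvB⟩⟩ u ⟨(h.mem_or_mem u).resolve_left hu, hu⟩ huv.symm

lemma IsSeparation.exists_mem_inter_of_chain (h : G.IsSeparation A B) {f : ℕ → V} {a b : ℕ}
    (hab : a ≤ b) (hf : ∀ t, a ≤ t → t < b → G.Adj (f t) (f (t + 1)))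
    (ha : f a ∉ A) (hb : f b ∉ B) : ∃ t, a < t ∧ t < b ∧ f t ∈ A ∩ B := by
  by_contra! hsep
  have hout : ∀ t, a ≤ t → t ≤ b → f t ∉ A := by
    refine Nat.le_induction (fun _ => ha) fun t hat ih htb => ?_
    refine h.notMem_of_adj (hf t hat htb) (ih (by omega)) fun hmem => ?_
    rcases htb.lt_or_eq with hlt | rfl
    · exact hsep _ (by omega) hlt hmem
    · exact hb hmem.2
  exact hb ((h.mem_or_mem (f b)).resolve_left (hout b hab le_rfl))

end Separation

lemma cycleGraph_adj_natCast_iff {n a b : ℕ} [NeZero n] (hab : a < b) (hba : b < a + n) :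
    (cycleGraph n).Adj a b ↔ b = a + 1 ∨ b + 1 = a + n := by
  have hwrap : ((a : Fin n) - b).val = a + n - b := by
    rw [← Fin.natCast_sub_natCast_val (n := n) (a := b) (b := a + n) (by omega) (by omega)]
    simp
  rw [cycleGraph_adj', hwrap, Fin.natCast_sub_natCast_val hab.le hba]
  omega

lemma not_isClique_of_range_cycleGraph_subset {V : Type*} {G : SimpleGraph V} {n : ℕ}
    (hn : 4 ≤ n) (emb : cycleGraph n ↪g G) {S : Set V} (hS : Set.range emb ⊆ S) :
    ¬ G.IsClique S := fun hS_clique => by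
  have : NeZero n := ⟨by omega⟩
  have hadj := hS_clique (hS ⟨((0 : ℕ) : Fin n), rfl⟩) (hS ⟨((2 : ℕ) : Fin n), rfl⟩)
    (emb.injective.ne (Fin.natCast_ne_natCast (by omega) (by omega)))
  rw [emb.map_adj_iff, cycleGraph_adj_natCast_iff (by omega) (by omega)] at hadj
  omega

end SimpleGraph

namespace IsCliqueSep

open SimpleGraph

variable {V : Type*} {G : SimpleGraph V} {A B : Set V}

lemma isSeparation (h : IsCliqueSep G A B) : G.IsSeparation A B := h.1

lemma symm (h : IsCliqueSep G A B) : IsCliqueSep G B A :=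
  ⟨h.isSeparation.symm, Set.inter_comm A B ▸ h.2⟩

lemma false_of_cycle_split {n : ℕ} [NeZero n] (emb : cycleGraph n ↪g G)
    (h : IsCliqueSep G A B) {p q : ℕ} (hpq : p < q) (hqp : q < p + n)
    (hp : emb p ∉ A) (hq : emb q ∉ B) : False := by
  have hstep : ∀ t : ℕ, G.Adj (emb t) (emb ((t + 1 : ℕ) : Fin n)) := fun t =>
    emb.map_adj_iff.mpr <|
      (cycleGraph_adj_natCast_iff (a := t) (b := t + 1) (by omega) (by omega)).mpr (.inl rfl)
  obtain ⟨s, hps, hsq, hs⟩ := h.isSeparation.exists_mem_inter_of_chain (f := fun t => emb t)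
    hpq.le (fun t _ _ => hstep t) hp hq
  obtain ⟨t, hqt, htp, ht⟩ := h.symm.isSeparation.exists_mem_inter_of_chain
    (f := fun t => emb t) (b := p + n) hqp.le (fun t _ _ => hstep t) hq (by simpa using hp)
  have hadj := h.2 hs ⟨ht.2, ht.1⟩
    (emb.injective.ne (Fin.natCast_ne_natCast (by omega) (by omega)))
  rw [emb.map_adj_iff, cycleGraph_adj_natCast_iff (by omega) (by omega)] at hadj
  omega

lemma range_subset_or {n : ℕ} (emb : cycleGraph n ↪g G) (h : IsCliqueSep G A B) :
    Set.range emb ⊆ A ∨ Set.range emb ⊆ B := by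
  by_contra! hsplit
  obtain ⟨⟨_, ⟨i, rfl⟩, hiA⟩, ⟨_, ⟨j, rfl⟩, hjB⟩⟩ :=
    And.imp Set.not_subset.mp Set.not_subset.mp hsplit
  have := i.neZero
  rw [← Fin.cast_val_eq_self i] at hiA
  rw [← Fin.cast_val_eq_self j] at hjB
  rcases lt_trichotomy i.val j.val with hij | hij | hij
  · exact h.false_of_cycle_split emb hij (by omega) hiA hjB
  · rw [hij] at hiA
    exact (h.isSeparation.mem_or_mem _).elim hiA hjB
  · exact h.symm.false_of_cycle_split emb hij (by omega) hjB hiA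

end IsCliqueSep

theorem hole_induces_tangle_general {V : Type*} (G : SimpleGraph V)
    (n : ℕ) (hn : 4 ≤ n) (emb : SimpleGraph.cycleGraph n ↪g G)
    (H : Set V) (hH : H = Set.range emb)
    (O : Set (Set V × Set V))
    (hO : O = {p : Set V × Set V | IsCliqueSep G p.1 p.2 ∧ H ⊆ p.2}) :
    -- `O_H` is a well-defined orientation of the clique separations:
    (∀ A B : Set V, IsCliqueSep G A B →
      (((A, B) ∈ O ∨ (B, A) ∈ O) ∧ ¬((A, B) ∈ O ∧ (B, A) ∈ O))) ∧
    -- `O_H` is consistent: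
    (∀ A B C D : Set V, (C, D) ∈ O → A ⊆ C → D ⊆ B →
      ({A, B} : Set (Set V)) ≠ {C, D} →
      (B, A) ∉ O) ∧
    -- `O_H` avoids every subset `F` with `⋂_{(A,B) ∈ F} B` a clique:
    (∀ F ⊆ O, ¬ G.IsClique (⋂ p ∈ F, p.2)) := by
  subst hH hO
  have hole {S : Set V} (hS : Set.range emb ⊆ S) : ¬ G.IsClique S :=
    SimpleGraph.not_isClique_of_range_cycleGraph_subset hn emb hS
  refine ⟨fun A B hAB => ⟨?_, ?_⟩, fun A B C D hCD _ hDB _ hBA => ?_, fun F hF => ?_⟩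
  · exact (hAB.range_subset_or emb).symm.imp (fun hB => ⟨hAB, hB⟩) fun hA => ⟨hAB.symm, hA⟩
  · exact fun ⟨⟨_, hB⟩, ⟨_, hA⟩⟩ => hole (Set.subset_inter hA hB) hAB.2
  · exact hole (Set.subset_inter (hCD.2.trans hDB) hBA.2) hBA.1.2
  · exact hole (Set.subset_iInter₂ fun q hq => (hF hq).2)

/-- Every hole `H` (an induced cycle on more than three vertices) of a finite graph `G`
that is not a clique induces the orientation `O_H = {(A,B) : V(H) ⊆ B}` of the system of
clique separations; this is a well-defined consistent orientation which avoids every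
subset whose right-hand sides intersect in a clique. -/
theorem hole_induces_tangle {V : Type*} [Fintype V] (G : SimpleGraph V)
    (hG : ¬ G.IsClique (Set.univ : Set V))
    (n : ℕ) (hn : 4 ≤ n) (emb : SimpleGraph.cycleGraph n ↪g G)
    (H : Set V) (hH : H = Set.range emb)
    (O : Set (Set V × Set V))
    (hO : O = {p : Set V × Set V | IsCliqueSep G p.1 p.2 ∧ H ⊆ p.2}) :
    -- `O_H` is a well-defined orientation of the clique separations:
    (∀ A B : Set V, IsCliqueSep G A B →
      (((A, B) ∈ O ∨ (B, A) ∈ O) ∧ ¬((A, B) ∈ O ∧ (B, A) ∈ O))) ∧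
    -- `O_H` is consistent:
    (∀ A B C D : Set V, (C, D) ∈ O → A ⊆ C → D ⊆ B →
      ({A, B} : Set (Set V)) ≠ {C, D} →
      (B, A) ∉ O) ∧
    -- `O_H` avoids every subset `F` with `⋂_{(A,B) ∈ F} B` a clique:
    (∀ F ⊆ O, ¬ G.IsClique (⋂ p ∈ F, p.2)) :=
  hole_induces_tangle_general G n hn emb H hH O hO
end
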